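/- arXiv:1302.2547 — 2 statements merged into one kernel-verified Lean document; each statement's English description precedes it below -/
import Mathlib

section
/- If A is symmetric positive semidefinite with null space spanned by the constant vector 1, and P is the aggregation prolongation of a partition into nonempty sets, then A_c = P^T A P is symmetric positive semidefinite and its null space is spanned by the coarse constant vector 1_c. -/
/-!
Since `Pᵀ A P` is a congruence of `A`, it is positive semidefinite, and its quadratic form
`yᵀ Pᵀ A P y` vanishes exactly when `A (P y) = 0`. Hence `Pᵀ A P y = 0` iff `P y` is constant.
Because the aggregates are disjoint, `(P y) i = y j` whenever `i ∈ G j`; nonemptiness then shows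
that `P y` constant forces `y` constant, and the covering property gives the converse.
-/

open Matrix Function
open scoped ComplexOrder

namespace Matrix

theorem PosSemidef.conjTranspose_mul_mul_same_mulVec_eq_zero_iff {m n 𝕜 : Type*} [Fintype m]
    [Fintype n] [RCLike 𝕜] {A : Matrix n n 𝕜} (hA : A.PosSemidef) (B : Matrix n m 𝕜)
    (y : m → 𝕜) : (Bᴴ * A * B) *ᵥ y = 0 ↔ A *ᵥ (B *ᵥ y) = 0 := by
  have hquad : star y ⬝ᵥ (Bᴴ * A * B) *ᵥ y = star (B *ᵥ y) ⬝ᵥ A *ᵥ (B *ᵥ y) := by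
    rw [← mulVec_mulVec, ← mulVec_mulVec, dotProduct_mulVec, vecMul_conjTranspose, star_star]
  rw [← (hA.conjTranspose_mul_mul_same B).dotProduct_mulVec_zero_iff, hquad,
    hA.dotProduct_mulVec_zero_iff]

def aggregation {ι κ R : Type*} [DecidableEq ι] [Zero R] [One R] (G : κ → Finset ι) :
    Matrix ι κ R :=
  of fun i j => if i ∈ G j then 1 else 0

section aggregation

variable {ι κ R : Type*} [Fintype κ] [DecidableEq ι] [NonAssocSemiring R] {G : κ → Finset ι}

theorem aggregation_mulVec_apply_of_mem (hdisj : Pairwise (Disjoint on G)) (y : κ → R)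
    {i : ι} {j : κ} (hi : i ∈ G j) : ((aggregation G : Matrix ι κ R) *ᵥ y) i = y j := by
  rw [mulVec, dotProduct, Finset.sum_eq_single j]
  · simp [aggregation, hi]
  · intro k _ hkj
    simp [aggregation, Finset.disjoint_left.mp (hdisj hkj.symm) hi]
  · simp

theorem aggregation_mulVec_eq_const_iff (hne : ∀ j, (G j).Nonempty)
    (hdisj : Pairwise (Disjoint on G)) (hcover : ∀ i, ∃ j, i ∈ G j) (y : κ → R) (c : R) :
    (aggregation G : Matrix ι κ R) *ᵥ y = (fun _ => c) ↔ y = fun _ => c := by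
  constructor
  · intro h
    funext j
    obtain ⟨i, hi⟩ := hne j
    rw [← aggregation_mulVec_apply_of_mem hdisj y hi, h]
  · rintro rfl
    funext i
    obtain ⟨j, hj⟩ := hcover i
    exact aggregation_mulVec_apply_of_mem hdisj _ hj

end aggregation

end Matrix

/-- If `A` is symmetric positive semidefinite with null space spanned by the constant
vector, and `P` is the aggregation prolongation of a partition into nonempty disjoint
sets, then `A_c = Pᵀ A P` is symmetric positive semidefinite and its null space is
spanned by the coarse constant vector. -/
theorem coarse_matrix_posSemidef_ker_const {n nc : ℕ}
    (G : Fin nc → Finset (Fin n))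
    (hne : ∀ j, (G j).Nonempty)
    (hdisj : ∀ j k, j ≠ k → Disjoint (G j) (G k))
    (hcover : ∀ i : Fin n, ∃ j, i ∈ G j)
    (P : Matrix (Fin n) (Fin nc) ℝ)
    (hP : ∀ i j, P i j = if i ∈ G j then 1 else 0)
    (A : Matrix (Fin n) (Fin n) ℝ) (hA : A.PosSemidef)
    (hker : ∀ x : Fin n → ℝ, A.mulVec x = 0 ↔ ∃ c : ℝ, x = fun _ => c) :
    (Pᵀ * A * P).PosSemidef ∧
    (∀ y : Fin nc → ℝ, (Pᵀ * A * P).mulVec y = 0 ↔ ∃ c : ℝ, y = fun _ => c) := by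
  have hPagg : P = aggregation G := by
    ext i j
    exact hP i j
  rw [← conjTranspose_eq_transpose_of_trivial]
  refine ⟨hA.conjTranspose_mul_mul_same P, fun y => ?_⟩
  rw [hA.conjTranspose_mul_mul_same_mulVec_eq_zero_iff, hker, hPagg]
  exact exists_congr fun c =>
    aggregation_mulVec_eq_const_iff hne (fun j k => hdisj j k) hcover y c
end

section
/- Let A be symmetric positive definite with diagonal entries a_{ii} and off-diagonal row sums d_{ii} = Σ_{j≠i} |a_{ij}|, and let M = diag(a_{ii} + d_{ii}). Then the ℓ¹-Jacobi iteration x ↦ x + M^{-1}(b − Ax) is convergent; equivalently, the spectral radius of I − M^{-1}A is strictly less than 1. -/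
/-!
An eigenpair `(μ, x)` of `I - M⁻¹ A` solves the generalized eigenproblem `A x = (1 - μ) M x`.
Both `A` and `M` stay positive definite over `ℂ`, so comparing `xᴴ A x` with `xᴴ M x` shows that
`1 - μ` is a positive real `r`. Gershgorin's argument for the singular matrix `A - r M` gives a
row `k` with `|a_kk - r (a_kk + d_k)| ≤ d_k`, which forces `r ≤ 1`. Hence `0 ≤ μ < 1`.
-/

open Matrix Finset
open scoped MatrixOrder ComplexOrder

theorem Matrix.map_mulVec_eq_smul_map_mulVec {R K n : Type*} [CommRing R] [CommRing K]
    [Fintype n] [DecidableEq n] (f : R →+* K) {M A : Matrix n n R} (hM : IsUnit M.det)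
    {x : n → K} {μ : K} (h : (1 - M⁻¹ * A).map f *ᵥ x = μ • x) :
    A.map f *ᵥ x = (1 - μ) • M.map f *ᵥ x := by
  have hsplit : M * (1 - M⁻¹ * A) = M - A := by
    rw [mul_sub, mul_one, ← mul_assoc, mul_nonsing_inv _ hM, one_mul]
  have hsub : (M * (1 - M⁻¹ * A)).map f *ᵥ x = (M - A).map f *ᵥ x := by rw [hsplit]
  rw [Matrix.map_mul, ← mulVec_mulVec, h, mulVec_smul, Matrix.map_sub _ (map_sub f),
    sub_mulVec] at hsub
  rw [sub_smul, one_smul, hsub, sub_sub_cancel]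

theorem Matrix.PosDef.map_algebraMap {𝕜 n : Type*} [RCLike 𝕜] [Fintype n] [DecidableEq n]
    {A : Matrix n n ℝ} (hA : A.PosDef) : (A.map (algebraMap ℝ 𝕜)).PosDef := by
  obtain ⟨B, rfl⟩ := CStarAlgebra.nonneg_iff_eq_star_mul_self.mp hA.posSemidef.nonneg
  have hB : (star B * B).map (algebraMap ℝ 𝕜) =
      (B.map (algebraMap ℝ 𝕜))ᴴ * B.map (algebraMap ℝ 𝕜) := by
    rw [Matrix.map_mul, ← conjTranspose_map _ fun _ => (RCLike.conj_ofReal _).symm]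
    rfl
  rw [hB, (posSemidef_conjTranspose_mul_self _).posDef_iff_isUnit, ← hB]
  exact hA.isUnit.map (algebraMap ℝ 𝕜).mapMatrix

theorem Matrix.PosDef.pos_of_mulVec_eq_smul_mulVec {𝕜 n : Type*} [RCLike 𝕜] [Fintype n]
    {A M : Matrix n n 𝕜} (hA : A.PosDef) (hM : M.PosDef) {x : n → 𝕜} (hx : x ≠ 0) {t : 𝕜}
    (h : A *ᵥ x = t • M *ᵥ x) : 0 < t := by
  have hAx := hA.dotProduct_mulVec_pos hx
  have hMx := hM.dotProduct_mulVec_pos hx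
  rw [h, dotProduct_smul, smul_eq_mul] at hAx
  simpa [hMx.ne'] using div_pos hAx hMx

theorem Matrix.exists_norm_sub_mul_le_of_mulVec_eq_smul_diagonal {K n : Type*} [NormedField K]
    [Fintype n] [DecidableEq n] {A : Matrix n n K} {c : n → K} {x : n → K} (hx : x ≠ 0) {t : K}
    (h : A *ᵥ x = t • diagonal c *ᵥ x) :
    ∃ k, ‖A k k - t * c k‖ ≤ ∑ j ∈ univ.erase k, ‖A k j‖ := by
  have hdet : (A - t • diagonal c).det = 0 :=
    exists_mulVec_eq_zero_iff.mp ⟨x, hx, by rw [sub_mulVec, smul_mulVec, h, sub_self]⟩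
  obtain ⟨k, hk⟩ := not_forall.mp (mt det_ne_zero_of_sum_row_lt_diag (not_not.mpr hdet))
  refine ⟨k, le_of_not_gt fun hlt => hk ?_⟩
  simp only [sub_apply, smul_apply, diagonal_apply_eq, smul_eq_mul]
  refine lt_of_eq_of_lt (sum_congr rfl fun j hj => ?_) hlt
  simp [diagonal_apply_ne _ (ne_of_mem_erase hj).symm]

/-- Let `A` be symmetric positive definite, `d i = Σ_{j≠i} |A i j|`, and
`M = diag(A i i + d i)`.  Then the `ℓ¹`-Jacobi iteration `x ↦ x + M⁻¹ (b − A x)` is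
convergent: the spectral radius of `I − M⁻¹ A` is strictly less than `1`, i.e., every
(complex) eigenvalue `μ` of `I − M⁻¹ A` satisfies `‖μ‖ < 1`. -/
theorem l1_jacobi_convergent {n : ℕ}
    (A : Matrix (Fin n) (Fin n) ℝ) (hA : A.PosDef)
    (M : Matrix (Fin n) (Fin n) ℝ)
    (hM : M = Matrix.diagonal (fun i => A i i + ∑ j ∈ Finset.univ.erase i, |A i j|))
    (μ : ℂ) (x : Fin n → ℂ) (hx : x ≠ 0)
    (heig : (((1 : Matrix (Fin n) (Fin n) ℝ) - M⁻¹ * A).map (Complex.ofReal)).mulVec x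
      = μ • x) :
    ‖μ‖ < 1 := by
  set c : Fin n → ℝ := fun i => A i i + ∑ j ∈ univ.erase i, |A i j|
  have hc_pos : ∀ i, 0 < c i := fun i =>
    add_pos_of_pos_of_nonneg hA.diag_pos (sum_nonneg fun j _ => abs_nonneg _)
  have hM_pos : M.PosDef := hM ▸ PosDef.diagonal hc_pos
  have hAM := map_mulVec_eq_smul_map_mulVec Complex.ofRealHom
    ((isUnit_iff_isUnit_det M).mp hM_pos.isUnit) heig
  obtain ⟨r, hr, hμ⟩ : ∃ r : ℝ, 0 < r ∧ (r : ℂ) = 1 - μ := RCLike.pos_iff_exists_ofReal.mp <|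
    hA.map_algebraMap.pos_of_mulVec_eq_smul_mulVec hM_pos.map_algebraMap hx hAM
  rw [hM, diagonal_map (map_zero _), ← hμ] at hAM
  obtain ⟨k, hk⟩ := exists_norm_sub_mul_le_of_mulVec_eq_smul_diagonal hx hAM
  simp only [map_apply, Complex.ofRealHom_eq_coe, ← Complex.ofReal_mul, ← Complex.ofReal_sub,
    Complex.norm_real, Real.norm_eq_abs] at hk
  have hr_le_one : r ≤ 1 := by
    have := neg_abs_le (A k k - r * c k)
    exact le_of_mul_le_mul_right (by linarith : r * c k ≤ 1 * c k) (hc_pos k)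
  have hμ_eq : μ = ((1 - r : ℝ) : ℂ) := by
    rw [Complex.ofReal_sub, Complex.ofReal_one, hμ]
    ring
  rw [hμ_eq, Complex.norm_real, Real.norm_eq_abs, abs_lt]
  constructor <;> linarith
end
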